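/- arXiv:2306.12470 — 2 statements merged into one kernel-verified Lean document; each statement's English description precedes it below -/
import Mathlib

section
/- Let Z be a subset of a finite set Q equal to the symmetric difference of a family of subsets x_1, ..., x_t, and suppose (1-δ)·Σᵢ|xᵢ| ≤ |Z| for some δ ∈ (0,1). Let Z_N be any subset of Q and let Z̃ = Z Δ Z_N. Define F* = { i : |Z̃| - |Z̃ Δ xᵢ| ≥ (1-ε)|xᵢ| } for some ε ∈ (2δ, 1). Then Σ_{i ∈ F*} |xᵢ| ≥ ((ε - 2δ)/(ε(1-δ)))·|Z| - (2/ε)·|Z_N|. -/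
open scoped symmDiff

private lemma card_symmDiff_aux {Q : Type*} [DecidableEq Q] (s t : Finset Q) :
    (s ∆ t).card + t.card = s.card + 2 * (t \ s).card := by
  have h2 : Disjoint (s \ t) (t \ s) := disjoint_sdiff_sdiff
  have h3 := Finset.card_sdiff_add_card_inter s t
  have h4 := Finset.card_sdiff_add_card_inter t s
  have h5 : (s ∆ t).card = (s \ t).card + (t \ s).card := by
    rw [symmDiff_def s t, Finset.sup_eq_union, Finset.card_union_of_disjoint h2]
  rw [Finset.inter_comm] at h4
  omega

/-- Lemma `flipexists`: let `Z` be the symmetric difference of a family `x₁,…,x_t`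
(expressed by the parity-of-membership characterization), with
`(1-δ)·Σᵢ|xᵢ| ≤ |Z|` for `δ ∈ (0,1)`. Let `Z_N` be any set and `Z̃ = Z ∆ Z_N`.
With `F* = {i : |Z̃| - |Z̃ ∆ xᵢ| ≥ (1-ε)|xᵢ|}` for `ε ∈ (2δ, 1)`, we have
`Σ_{i∈F*} |xᵢ| ≥ ((ε-2δ)/(ε(1-δ)))·|Z| - (2/ε)·|Z_N|`. -/
theorem flip_sets_weight_bound {Q : Type*} [DecidableEq Q] [Fintype Q]
    (t : ℕ) (x : Fin t → Finset Q) (Z Z_N : Finset Q)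
    (hZ : ∀ q : Q, q ∈ Z ↔ Odd ((Finset.univ.filter fun i => q ∈ x i).card))
    (δ ε : ℝ) (hδ0 : 0 < δ) (hδ1 : δ < 1) (hε : 2 * δ < ε) (hε1 : ε < 1)
    (hdecomp : (1 - δ) * (∑ i, ((x i).card : ℝ)) ≤ (Z.card : ℝ)) :
    ((ε - 2 * δ) / (ε * (1 - δ))) * (Z.card : ℝ) - (2 / ε) * (Z_N.card : ℝ) ≤
      ∑ i ∈ Finset.univ.filter
        (fun i => (1 - ε) * ((x i).card : ℝ) ≤
          (((Z ∆ Z_N).card : ℝ) - (((Z ∆ Z_N) ∆ (x i)).card : ℝ))),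
        ((x i).card : ℝ) := by
  classical
  set Zt := Z ∆ Z_N with hZt
  set C : Q → ℕ := fun q => (Finset.univ.filter fun i => q ∈ x i).card with hC
  have hε0 : (0:ℝ) < ε := lt_trans (by linarith) hε
  -- double counting : total weight
  have hS : ∑ i, (x i).card = ∑ q : Q, C q := by
    simp only [hC, Finset.card_filter]
    rw [Finset.sum_comm]
    simp [Finset.card_filter]
  -- double counting : weight outside Z̃
  have hB : ∑ i, (x i \ Zt).card = ∑ q ∈ Ztᶜ, C q := by
    have h : ∀ i, x i \ Zt = Ztᶜ.filter (· ∈ x i) := by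
      intro i; ext q; simp [and_comm]
    simp only [h, Finset.card_filter, hC]
    rw [Finset.sum_comm]
  -- each point of Z has C q ≥ 1
  have hpos : ∀ q ∈ Z, 1 ≤ C q := fun q hq => ((hZ q).1 hq).pos
  -- key combinatorial inequality: ∑_{q ∉ Z̃} C q + |Z| ≤ |Z_N| + ∑ᵢ |xᵢ|
  have hkey : (∑ q ∈ Ztᶜ, C q) + Z.card ≤ Z_N.card + ∑ i, (x i).card := by
    have hsub : Ztᶜ ⊆ (Z ∩ Z_N) ∪ Zᶜ := by
      intro q hq
      simp only [hZt, Finset.mem_compl, Finset.mem_symmDiff] at hq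
      push_neg at hq
      by_cases h : q ∈ Z
      · exact Finset.mem_union.2 (Or.inl (Finset.mem_inter.2 ⟨h, hq.1 h⟩))
      · exact Finset.mem_union.2 (Or.inr (Finset.mem_compl.2 h))
    have h1 : (∑ q ∈ Ztᶜ, C q) ≤ ∑ q ∈ (Z ∩ Z_N) ∪ Zᶜ, C q :=
      Finset.sum_le_sum_of_subset hsub
    have h2 : ∑ q ∈ (Z ∩ Z_N) ∪ Zᶜ, C q = (∑ q ∈ Z ∩ Z_N, C q) + ∑ q ∈ Zᶜ, C q := by
      apply Finset.sum_union
      exact Finset.disjoint_left.2 fun q hq hq' =>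
        (Finset.mem_compl.1 hq') (Finset.mem_inter.1 hq).1
    have h3 : ∑ q : Q, C q = (∑ q ∈ Z, C q) + ∑ q ∈ Zᶜ, C q :=
      (Finset.sum_add_sum_compl Z C).symm
    have h4 : ∑ q ∈ Z, C q = (∑ q ∈ Z ∩ Z_N, C q) + ∑ q ∈ Z \ Z_N, C q := by
      rw [← Finset.sum_union (Finset.disjoint_left.2 fun q hq hq' =>
        (Finset.mem_sdiff.1 hq').2 (Finset.mem_inter.1 hq).2)]
      congr 1
      ext q; simp only [Finset.mem_union, Finset.mem_inter, Finset.mem_sdiff]; tauto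
    have h5 : Z.card = (Z ∩ Z_N).card + (Z \ Z_N).card :=
      (Finset.card_inter_add_card_sdiff Z Z_N).symm
    have h6 : (Z ∩ Z_N).card ≤ Z_N.card :=
      Finset.card_le_card (Finset.inter_subset_right)
    have h7 : (Z \ Z_N).card ≤ ∑ q ∈ Z \ Z_N, C q := by
      calc (Z \ Z_N).card = ∑ _q ∈ Z \ Z_N, 1 := by simp
        _ ≤ ∑ q ∈ Z \ Z_N, C q :=
          Finset.sum_le_sum fun q hq => hpos q (Finset.mem_sdiff.1 hq).1
    omega
  -- each piece: (1-ε)|xᵢ| > gain → ε|xᵢ| < 2|xᵢ \ Z̃|   (via the symmDiff card identity)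
  have hid : ∀ i, ((Zt ∆ x i).card : ℝ) + ((x i).card : ℝ)
      = (Zt.card : ℝ) + 2 * ((x i \ Zt).card : ℝ) := by
    intro i
    have := card_symmDiff_aux Zt (x i)
    exact_mod_cast congrArg (Nat.cast : ℕ → ℝ) this
  set F := Finset.univ.filter
      (fun i => (1 - ε) * ((x i).card : ℝ) ≤
        ((Zt.card : ℝ) - ((Zt ∆ x i).card : ℝ))) with hF
  -- real quantities
  set S : ℝ := ∑ i, ((x i).card : ℝ) with hSr
  set B : ℝ := ∑ i, ((x i \ Zt).card : ℝ) with hBr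
  set W : ℝ := ∑ i ∈ F, ((x i).card : ℝ) with hW
  have hmain : ε * (S - W) ≤ 2 * B := by
    have hSW : S - W = ∑ i ∈ Fᶜ, ((x i).card : ℝ) := by
      rw [hSr, hW, ← Finset.sum_add_sum_compl F (fun i => ((x i).card : ℝ))]
      ring
    have hBge : ∑ i ∈ Fᶜ, ((x i \ Zt).card : ℝ) ≤ B := by
      apply Finset.sum_le_sum_of_subset_of_nonneg (Finset.subset_univ _)
      intro i _ _; positivity
    have hterm : ∀ i ∈ Fᶜ, ε * ((x i).card : ℝ) ≤ 2 * ((x i \ Zt).card : ℝ) := by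
      intro i hi
      rw [Finset.mem_compl, hF, Finset.mem_filter] at hi
      push_neg at hi
      have h := hi (Finset.mem_univ i)
      have := hid i
      nlinarith [this, h]
    calc ε * (S - W) = ∑ i ∈ Fᶜ, ε * ((x i).card : ℝ) := by
          rw [hSW, Finset.mul_sum]
      _ ≤ ∑ i ∈ Fᶜ, 2 * ((x i \ Zt).card : ℝ) := Finset.sum_le_sum hterm
      _ = 2 * ∑ i ∈ Fᶜ, ((x i \ Zt).card : ℝ) := by rw [Finset.mul_sum]
      _ ≤ 2 * B := by linarith
  -- cast the key inequality to ℝ : B + |Z| ≤ |Z_N| + S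
  have hkeyR : B + (Z.card : ℝ) ≤ (Z_N.card : ℝ) + S := by
    have hBnat : B = ((∑ i, (x i \ Zt).card : ℕ) : ℝ) := by
      rw [hBr]; push_cast; rfl
    have hSnat : S = ((∑ i, (x i).card : ℕ) : ℝ) := by
      rw [hSr]; push_cast; rfl
    rw [hBnat, hSnat]
    have : (∑ i, (x i \ Zt).card) + Z.card ≤ Z_N.card + ∑ i, (x i).card := by
      rw [hB]; exact hkey
    exact_mod_cast this
  -- finish with algebra
  have hgoal : ((ε - 2 * δ) / (ε * (1 - δ))) * (Z.card : ℝ) - (2 / ε) * (Z_N.card : ℝ) ≤ W := by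
    have hδ' : (0:ℝ) < 1 - δ := by linarith
    have hSle : S ≤ (Z.card : ℝ) / (1 - δ) := by
      rw [le_div_iff₀ hδ']; linarith [hdecomp]
    have hZnn : (0:ℝ) ≤ (Z.card : ℝ) := Nat.cast_nonneg _
    have hWlb : ε * W ≥ (ε - 2) * S + 2 * (Z.card : ℝ) - 2 * (Z_N.card : ℝ) := by
      nlinarith [hmain, hkeyR]
    have hSlb : (ε - 2) * S ≥ (ε - 2) * ((Z.card : ℝ) / (1 - δ)) := by
      apply mul_le_mul_of_nonpos_left hSle (by linarith)
    have h1 : ε * W ≥ (ε - 2) * ((Z.card : ℝ) / (1 - δ)) + 2 * (Z.card : ℝ)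
        - 2 * (Z_N.card : ℝ) := by linarith
    have h2 := mul_le_mul_of_nonneg_left h1 hδ'.le
    have e : (1 - δ) * ((ε - 2) * ((Z.card : ℝ) / (1 - δ)) + 2 * (Z.card : ℝ)
        - 2 * (Z_N.card : ℝ)) = (ε - 2 * δ) * (Z.card : ℝ) - 2 * (1 - δ) * (Z_N.card : ℝ) := by
      field_simp
      ring
    have h1' : (ε - 2 * δ) * (Z.card : ℝ) - 2 * (1 - δ) * (Z_N.card : ℝ)
        ≤ ε * (1 - δ) * W := by nlinarith [h2, e]
    rw [sub_le_iff_le_add, div_mul_eq_mul_div,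
      div_le_iff₀ (by positivity : (0:ℝ) < ε * (1 - δ))]
    have e2 : (W + 2 / ε * (Z_N.card : ℝ)) * (ε * (1 - δ))
        = ε * (1 - δ) * W + 2 * (1 - δ) * (Z_N.card : ℝ) := by
      field_simp
    linarith [h1', e2]
  convert hgoal using 2
end

section
/- Under the hypotheses of the previous statement, if additionally no index i satisfies |Z̃| - |Z̃ Δ xᵢ| ≥ (1-ε)|xᵢ| (i.e., F* is empty), then ((ε - 2δ)/(ε(1-δ)))·|Z| ≤ (2/ε)·|Z_N|. -/
open scoped symmDiff

lemma card_symmDiff_aux_s3 {Q : Type*} [DecidableEq Q] (A B : Finset Q) :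
    (A ∆ B).card + 2 * (A ∩ B).card = A.card + B.card := by
  have h : A ∆ B = (A \ B) ∪ (B \ A) := by
    ext q; simp [Finset.mem_symmDiff]
  have hd : Disjoint (A \ B) (B \ A) := by
    rw [Finset.disjoint_left]; intro a ha hb
    simp only [Finset.mem_sdiff] at ha hb; exact hb.2 ha.1
  rw [h, Finset.card_union_of_disjoint hd]
  have h1 := Finset.card_sdiff_add_card_inter A B
  have h2 := Finset.card_sdiff_add_card_inter B A
  rw [Finset.inter_comm B A] at h2
  omega

lemma double_count {Q : Type*} [DecidableEq Q] [Fintype Q]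
    {t : ℕ} (x : Fin t → Finset Q) (s : Finset Q) :
    ∑ i, (s ∩ x i).card = ∑ q ∈ s, (Finset.univ.filter fun i => q ∈ x i).card := by
  calc ∑ i, (s ∩ x i).card
      = ∑ i, ∑ q ∈ s, if q ∈ x i then 1 else 0 := by
        refine Finset.sum_congr rfl fun i _ => ?_
        rw [← Finset.filter_mem_eq_inter, Finset.card_filter]
    _ = ∑ q ∈ s, ∑ i, if q ∈ x i then 1 else 0 := Finset.sum_comm
    _ = ∑ q ∈ s, (Finset.univ.filter fun i => q ∈ x i).card := by
        refine Finset.sum_congr rfl fun q _ => ?_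
        rw [Finset.card_filter]

/-- If, under the hypotheses of the flip-set bound, no index `i` satisfies the
weight-reduction criterion `|Z̃| - |Z̃ ∆ xᵢ| ≥ (1-ε)|xᵢ|` (i.e. `F*` is empty),
then `((ε-2δ)/(ε(1-δ)))·|Z| ≤ (2/ε)·|Z_N|`. -/
theorem no_flip_implies_small_mismatch {Q : Type*} [DecidableEq Q] [Fintype Q]
    (t : ℕ) (x : Fin t → Finset Q) (Z Z_N : Finset Q)
    (hZ : ∀ q : Q, q ∈ Z ↔ Odd ((Finset.univ.filter fun i => q ∈ x i).card))
    (δ ε : ℝ) (hδ0 : 0 < δ) (hδ1 : δ < 1 / 2) (hε : 2 * δ < ε) (hε1 : ε < 1)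
    (hdecomp : (1 - δ) * (∑ i, ((x i).card : ℝ)) ≤ (Z.card : ℝ))
    (hempty : ∀ i : Fin t,
      ¬ ((1 - ε) * ((x i).card : ℝ) ≤
        (((Z ∆ Z_N).card : ℝ) - (((Z ∆ Z_N) ∆ (x i)).card : ℝ)))) :
    ((ε - 2 * δ) / (ε * (1 - δ))) * (Z.card : ℝ) ≤ (2 / ε) * (Z_N.card : ℝ) := by
  have hε0 : (0:ℝ) < ε := lt_trans (by linarith) hε
  have hδ1' : (0:ℝ) < 1 - δ := by linarith
  set Zt := Z ∆ Z_N with hZt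
  -- per-index bound: |Zt ∩ xᵢ| ≤ (1 - ε/2)|xᵢ|
  have hstep : ∀ i : Fin t, ((Zt ∩ x i).card : ℝ) ≤ (1 - ε / 2) * ((x i).card : ℝ) := by
    intro i
    have h1 := hempty i
    push_neg at h1
    have h2 := card_symmDiff_aux_s3 Zt (x i)
    have h2' : ((Zt ∆ x i).card : ℝ) + 2 * ((Zt ∩ x i).card : ℝ)
        = (Zt.card : ℝ) + ((x i).card : ℝ) := by exact_mod_cast congrArg (Nat.cast : ℕ → ℝ) h2
    linarith
  -- sum over i
  have hsum : (∑ i, ((Zt ∩ x i).card : ℝ)) ≤ (1 - ε / 2) * ∑ i, ((x i).card : ℝ) := by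
    rw [Finset.mul_sum]
    exact Finset.sum_le_sum fun i _ => hstep i
  -- double counting: ∑ i |Zt ∩ xᵢ| = ∑_{q ∈ Zt} m q
  have hdc : ∑ i, (Zt ∩ x i).card = ∑ q ∈ Zt, (Finset.univ.filter fun i => q ∈ x i).card :=
    double_count x Zt
  -- lower bound on ∑_{q ∈ Zt} m q
  have hsub : Z \ Z_N ⊆ Zt := by
    intro q hq
    rw [Finset.mem_sdiff] at hq
    simp [hZt, Finset.mem_symmDiff, hq.1, hq.2]
  have hlow : (Z \ Z_N).card ≤ ∑ q ∈ Zt, (Finset.univ.filter fun i => q ∈ x i).card := by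
    calc (Z \ Z_N).card = ∑ q ∈ Z \ Z_N, 1 := (Finset.card_eq_sum_ones _)
      _ ≤ ∑ q ∈ Z \ Z_N, (Finset.univ.filter fun i => q ∈ x i).card := by
          refine Finset.sum_le_sum fun q hq => ?_
          have hqZ : q ∈ Z := (Finset.mem_sdiff.mp hq).1
          exact ((hZ q).mp hqZ).pos
      _ ≤ ∑ q ∈ Zt, (Finset.univ.filter fun i => q ∈ x i).card :=
          Finset.sum_le_sum_of_subset hsub
  have hcardZ : Z.card ≤ (Z \ Z_N).card + Z_N.card := by
    have := Finset.card_sdiff_add_card Z Z_N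
    have h2 : Z.card ≤ (Z ∪ Z_N).card := Finset.card_le_card Finset.subset_union_left
    omega
  -- combine in ℝ
  have hchain : (Z.card : ℝ) - (Z_N.card : ℝ) ≤ (1 - ε / 2) * ∑ i, ((x i).card : ℝ) := by
    have h1 : ((Z \ Z_N).card : ℝ) ≤ ∑ i, ((Zt ∩ x i).card : ℝ) := by
      rw [← Nat.cast_sum]
      exact_mod_cast hdc ▸ hlow
    have h2 : (Z.card : ℝ) ≤ ((Z \ Z_N).card : ℝ) + (Z_N.card : ℝ) := by
      exact_mod_cast hcardZ
    linarith
  have hS : (∑ i, ((x i).card : ℝ)) ≤ (Z.card : ℝ) / (1 - δ) := by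
    rw [le_div_iff₀ hδ1']
    linarith [hdecomp]
  have hS0 : (0:ℝ) ≤ ∑ i, ((x i).card : ℝ) :=
    Finset.sum_nonneg fun i _ => by positivity
  have hkey : (ε / 2 - δ) * (Z.card : ℝ) ≤ (1 - δ) * (Z_N.card : ℝ) := by
    have h3 : (1 - ε / 2) * (∑ i, ((x i).card : ℝ)) ≤ (1 - ε / 2) * ((Z.card : ℝ) / (1 - δ)) :=
      mul_le_mul_of_nonneg_left hS (by linarith)
    have h4 : (Z.card : ℝ) - (Z_N.card : ℝ) ≤ (1 - ε / 2) * ((Z.card : ℝ) / (1 - δ)) :=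
      le_trans hchain h3
    have h5 := mul_le_mul_of_nonneg_left h4 (le_of_lt hδ1')
    have heq : (1 - δ) * ((1 - ε / 2) * ((Z.card : ℝ) / (1 - δ))) = (1 - ε / 2) * (Z.card : ℝ) := by
      field_simp
    rw [heq] at h5
    nlinarith [h5]
  rw [div_mul_eq_mul_div, div_le_iff₀ (by positivity)]
  have h6 : 2 / ε * (Z_N.card : ℝ) * (ε * (1 - δ)) = 2 * ((1 - δ) * (Z_N.card : ℝ)) := by
    field_simp
  rw [h6]
  nlinarith [hkey]
end
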